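/- arXiv:1603.06122 — 2 statements merged into one kernel-verified Lean document; each statement's English description precedes it below -/
import Mathlib

section
/- Let (f,C) be a low-defect pair of degree r > 0 and let 0 ≤ s < δ(f,C) be a real number. Then there exists a number K such that whenever δ_{f,C}(k₁,…,k_r) < s, there is some index i with xᵢ minimal in the nesting order of f and kᵢ ≤ K. -/
/-- `CpxW n k` : the positive integer `n` can be written using exactly `k` ones,
with an arbitrary combination of additions and multiplications. -/
inductive CpxW : ℕ → ℕ → Prop
  | one : CpxW 1 1
  | add {a b m n : ℕ} : CpxW a m → CpxW b n → CpxW (a + b) (m + n)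
  | mul {a b m n : ℕ} : CpxW a m → CpxW b n → CpxW (a * b) (m + n)

/-- The integer complexity `‖n‖`: the least number of 1's needed to write `n`
using additions and multiplications. -/
noncomputable def cpx (n : ℕ) : ℕ := sInf {k | CpxW n k}

/-- The defect `δ(n) = ‖n‖ - 3 log₃ n`. -/
noncomputable def defect (n : ℕ) : ℝ := (cpx n : ℝ) - 3 * Real.logb 3 (n : ℝ)

/-- `LDP r f C` : `(f, C)` is a low-defect pair of degree `r`; here a low-defect
polynomial of degree `r` is written in the variables `X 0, …, X (r-1)`. -/
inductive LDP : ℕ → MvPolynomial ℕ ℤ → ℕ → Prop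
  | const (k C : ℕ) (hk : 0 < k) (hC : cpx k ≤ C) :
      LDP 0 (MvPolynomial.C (k : ℤ)) C
  | mul {r₁ r₂ : ℕ} {f₁ f₂ : MvPolynomial ℕ ℤ} {C₁ C₂ : ℕ} :
      LDP r₁ f₁ C₁ → LDP r₂ f₂ C₂ →
      LDP (r₁ + r₂) (f₁ * MvPolynomial.rename (· + r₁) f₂) (C₁ + C₂)
  | step {r : ℕ} {f : MvPolynomial ℕ ℤ} {C : ℕ} (c D : ℕ) (hc : 0 < c) (hD : cpx c ≤ D) :
      LDP r f C → LDP (r + 1) (f * MvPolynomial.X r + MvPolynomial.C (c : ℤ)) (C + D)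

/-- A low-defect polynomial: the first component of some low-defect pair. -/
def LowDefectPoly (f : MvPolynomial ℕ ℤ) : Prop := ∃ r C, LDP r f C

/-- The leading coefficient of a low-defect polynomial of degree `r`:
the coefficient of `x₁ ⋯ x_r`. -/
noncomputable def leadCoeff (r : ℕ) (f : MvPolynomial ℕ ℤ) : ℤ :=
  MvPolynomial.coeff (∑ i ∈ Finset.range r, Finsupp.single i 1) f

/-- The defect `δ(f,C) = C - 3 log₃ a` of a low-defect pair of degree `r`,
where `a` is the leading coefficient. -/
noncomputable def pairDft (r : ℕ) (f : MvPolynomial ℕ ℤ) (C : ℕ) : ℝ :=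
  (C : ℝ) - 3 * Real.logb 3 ((leadCoeff r f : ℤ) : ℝ)

/-- `f(3^{k₁}, …, 3^{k_r})` for a polynomial of degree `r`. -/
noncomputable def eval3 (r : ℕ) (f : MvPolynomial ℕ ℤ) (k : ℕ → ℕ) : ℤ :=
  MvPolynomial.eval (fun i => if i < r then (3 : ℤ) ^ (k i) else 1) f

/-- `δ_{f,C}(k₁,…,k_r) = C + 3(k₁+⋯+k_r) - 3 log₃ f(3^{k₁},…,3^{k_r})`. -/
noncomputable def dftF (r : ℕ) (f : MvPolynomial ℕ ℤ) (C : ℕ) (k : ℕ → ℕ) : ℝ :=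
  (C : ℝ) + 3 * (∑ i ∈ Finset.range r, (k i : ℝ))
    - 3 * Real.logb 3 ((eval3 r f k : ℤ) : ℝ)

/-- The nesting order: `NestLe f i j` means `xᵢ ⪯ xⱼ`, i.e. every monomial of `f`
divisible by `xᵢ` is divisible by `xⱼ`. -/
def NestLe (f : MvPolynomial ℕ ℤ) (i j : ℕ) : Prop :=
  ∀ m ∈ f.support, m i ≠ 0 → m j ≠ 0

/-- `xᵢ` is a variable of (the degree-`r` polynomial) `f` that is minimal with
respect to the nesting order. -/
def IsMinVar (r : ℕ) (f : MvPolynomial ℕ ℤ) (i : ℕ) : Prop :=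
  i < r ∧ ∀ j < r, NestLe f j i → NestLe f i j

/-- Substituting `3^k` for the variable `xᵢ` of `f`, renumbering the later
variables down by one. -/
noncomputable def truncAt (f : MvPolynomial ℕ ℤ) (i k : ℕ) : MvPolynomial ℕ ℤ :=
  MvPolynomial.aeval (fun j => if j < i then MvPolynomial.X j
    else if j = i then MvPolynomial.C ((3 : ℤ) ^ k) else MvPolynomial.X (j - 1)) f

/-- A direct truncation of a "pair with degree" `(r, f, C)`: substitute `3^k`
into a variable of `f` minimal in the nesting order. -/
def DirectTrunc (a b : ℕ × MvPolynomial ℕ ℤ × ℕ) : Prop :=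
  ∃ i k : ℕ, a.1 = b.1 + 1 ∧ IsMinVar a.1 a.2.1 i ∧
    b.2.1 = truncAt a.2.1 i k ∧ b.2.2 = a.2.2 + 3 * k

/-- `n` is a leader: either `3 ∤ n`, or `3 ∣ n` and `‖n‖ < ‖n/3‖ + 3`. -/
def IsLeader (n : ℕ) : Prop := 0 < n ∧ (3 ∣ n → cpx n < cpx (n / 3) + 3)

/-- `(f, C)` (of degree `r`) efficiently 3-represents `n`. -/
def EffRep (r : ℕ) (f : MvPolynomial ℕ ℤ) (C : ℕ) (n : ℕ) : Prop :=
  ∃ k : ℕ → ℕ, (n : ℤ) = eval3 r f k ∧ cpx n = C + 3 * ∑ i ∈ Finset.range r, k i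

/-- The number of `∗`-entries (free coordinates) of `p` among `0, …, r-1`. -/
def starCount (r : ℕ) (p : ℕ → Option ℕ) : ℕ :=
  ((Finset.range r).filter (fun i => p i = none)).card

/-- The 3-substitution of a tuple `p ∈ (ℤ≥0 ∪ {∗})^r` into `f`: substitute
`3^{kᵢ}` for `xᵢ` whenever `p i = some kᵢ`, renumbering the surviving variables
in increasing order. -/
noncomputable def subst3 (f : MvPolynomial ℕ ℤ) (p : ℕ → Option ℕ) : MvPolynomial ℕ ℤ :=
  MvPolynomial.aeval (fun j =>
    match p j with
    | some k => MvPolynomial.C ((3 : ℤ) ^ k)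
    | none => MvPolynomial.X (((Finset.range j).filter (fun i => p i = none)).card)) f

/-- The insertion map `ι` associated to `p`: inserts the arguments into the
coordinates of `p` equal to `∗`. -/
def iotaMap (p : ℕ → Option ℕ) (ℓ : ℕ → ℕ) : ℕ → ℕ := fun j =>
  match p j with
  | some k => k
  | none => ℓ (((Finset.range j).filter (fun i => p i = none)).card)

/-!
Every low-defect polynomial is multilinear in `x₀, …, x_{r-1}`, has nonnegative coefficients,
and contains `x₀ ⋯ x_{r-1}` with coefficient `a > 0`. Any other monomial misses some variable
`xⱼ`, hence misses every `xᵢ ⪯ xⱼ`, in particular a minimal one. So if every minimal coordinate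
`kᵢ` is at least `K`, each non-leading term of `f(3^{k})` is at most its coefficient times
`3^{k₁+⋯+k_r-K}`, giving `f(3^{k}) ≤ (a + M/3^K)·3^{k₁+⋯+k_r}` with `M` the sum of the
coefficients. Hence `δ_{f,C}(k) ≥ C - 3 log₃ (a + M/3^K)`, which tends to `δ(f,C) > s`
as `K → ∞`.
-/
open MvPolynomial Finset Filter Topology Real

noncomputable def leadMonomial (r : ℕ) : ℕ →₀ ℕ := ∑ i ∈ range r, Finsupp.single i 1

lemma leadMonomial_apply (r i : ℕ) : leadMonomial r i = if i < r then 1 else 0 := by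
  simp [leadMonomial, Finsupp.finsetSum_apply, Finsupp.single_apply]

lemma leadMonomial_succ (r : ℕ) :
    leadMonomial (r + 1) = leadMonomial r + Finsupp.single r 1 :=
  sum_range_succ _ _

lemma leadMonomial_add (r₁ r₂ : ℕ) :
    leadMonomial (r₁ + r₂) =
      leadMonomial r₁ + Finsupp.mapDomain (· + r₁) (leadMonomial r₂) := by
  simp [leadMonomial, sum_range_add, Finsupp.mapDomain_finsetSum, add_comm]

lemma Finsupp.weight_mono {σ : Type*} (w : σ → ℕ) {m n : σ →₀ ℕ} (h : m ≤ n) :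
    Finsupp.weight w m ≤ Finsupp.weight w n := by
  obtain ⟨d, rfl⟩ := exists_add_of_le h
  simp

lemma weight_leadMonomial (w : ℕ → ℕ) (r : ℕ) :
    Finsupp.weight w (leadMonomial r) = ∑ i ∈ range r, w i := by
  simp [leadMonomial, Finsupp.weight_single]

lemma nestLe_refl (f : MvPolynomial ℕ ℤ) (i : ℕ) : NestLe f i i := fun _ _ h => h

lemma NestLe.trans {f : MvPolynomial ℕ ℤ} {i j l : ℕ} (hij : NestLe f i j)
    (hjl : NestLe f j l) : NestLe f i l :=
  fun m hm h => hjl m hm (hij m hm h)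

lemma exists_isMinVar_nestLe (f : MvPolynomial ℕ ℤ) {r j : ℕ} (hj : j < r) :
    ∃ i, IsMinVar r f i ∧ NestLe f i j := by
  classical
  obtain ⟨i, hi, hmin⟩ := ((range r).filter (NestLe f · j)).exists_minimalFor
    (fun i => {l | NestLe f l i}) ⟨j, by simp [hj, nestLe_refl]⟩
  simp only [mem_filter, mem_range] at hi hmin
  refine ⟨i, ⟨hi.1, fun l hl hli => ?_⟩, hi.2⟩
  exact hmin ⟨hl, hli.trans hi.2⟩ (fun _ h => h.trans hli) (nestLe_refl f i)

section NonnegCoeffs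

variable {σ τ R : Type*} [CommSemiring R] [PartialOrder R] {p q : MvPolynomial σ R}

lemma coeff_mul_nonneg [IsOrderedRing R] (hp : ∀ m, 0 ≤ coeff m p) (hq : ∀ m, 0 ≤ coeff m q)
    (m : σ →₀ ℕ) : 0 ≤ coeff m (p * q) := by
  classical
  rw [coeff_mul]
  exact sum_nonneg fun x _ => mul_nonneg (hp _) (hq _)

lemma coeff_mul_le_coeff_add [IsOrderedRing R] (hp : ∀ m, 0 ≤ coeff m p)
    (hq : ∀ m, 0 ≤ coeff m q) (m₁ m₂ : σ →₀ ℕ) :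
    coeff m₁ p * coeff m₂ q ≤ coeff (m₁ + m₂) (p * q) := by
  classical
  rw [coeff_mul]
  exact single_le_sum (f := fun x : (σ →₀ ℕ) × (σ →₀ ℕ) => coeff x.1 p * coeff x.2 q)
    (fun x _ => mul_nonneg (hp x.1) (hq x.2)) (a := (m₁, m₂)) (mem_antidiagonal.2 rfl)

lemma coeff_rename_nonneg {e : σ → τ} (he : Function.Injective e) (hp : ∀ m, 0 ≤ coeff m p)
    (m : τ →₀ ℕ) : 0 ≤ coeff m (rename e p) := by
  by_cases h : ∃ d : σ →₀ ℕ, d.mapDomain e = m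
  · obtain ⟨d, rfl⟩ := h
    rw [coeff_rename_mapDomain e he]
    exact hp d
  · rw [coeff_rename_eq_zero e p m fun u hu => (h ⟨u, hu⟩).elim]

end NonnegCoeffs

lemma leadCoeff_eq_coeff (r : ℕ) (f : MvPolynomial ℕ ℤ) :
    leadCoeff r f = coeff (leadMonomial r) f :=
  rfl

structure LowDefectShape (r : ℕ) (f : MvPolynomial ℕ ℤ) : Prop where
  coeff_nonneg : ∀ m, 0 ≤ coeff m f
  le_leadMonomial : ∀ m ∈ f.support, m ≤ leadMonomial r
  leadCoeff_pos : 0 < leadCoeff r f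

namespace LowDefectShape

lemma const {k : ℕ} (hk : 0 < k) : LowDefectShape 0 (C (k : ℤ)) where
  coeff_nonneg m := by
    rw [coeff_C]
    split_ifs <;> positivity
  le_leadMonomial m hm := by
    rw [mem_support_iff, coeff_C] at hm
    simp [← (ite_ne_right_iff.1 hm).1]
  leadCoeff_pos := by
    rw [leadCoeff_eq_coeff, leadMonomial, sum_range_zero, coeff_C, if_pos rfl]
    exact_mod_cast hk

lemma mul {r₁ r₂ : ℕ} {f₁ f₂ : MvPolynomial ℕ ℤ} (h₁ : LowDefectShape r₁ f₁)
    (h₂ : LowDefectShape r₂ f₂) :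
    LowDefectShape (r₁ + r₂) (f₁ * rename (· + r₁) f₂) where
  coeff_nonneg :=
    coeff_mul_nonneg h₁.coeff_nonneg (coeff_rename_nonneg (add_left_injective r₁) h₂.coeff_nonneg)
  le_leadMonomial m hm := by
    classical
    obtain ⟨m₁, hm₁, m₂, hm₂, rfl⟩ := mem_add.1 (support_mul _ _ hm)
    rw [support_rename_of_injective (add_left_injective r₁), mem_image] at hm₂
    obtain ⟨d, hd, rfl⟩ := hm₂
    rw [leadMonomial_add]
    exact add_le_add (h₁.le_leadMonomial m₁ hm₁)
      (Finsupp.mapDomain_mono (h₂.le_leadMonomial d hd))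
  leadCoeff_pos := by
    have hle := coeff_mul_le_coeff_add h₁.coeff_nonneg
      (coeff_rename_nonneg (add_left_injective r₁) h₂.coeff_nonneg) (leadMonomial r₁)
      (Finsupp.mapDomain (· + r₁) (leadMonomial r₂))
    rw [coeff_rename_mapDomain _ (add_left_injective r₁), ← leadMonomial_add] at hle
    exact (mul_pos h₁.leadCoeff_pos h₂.leadCoeff_pos).trans_le hle

lemma mul_X_add_C {r c : ℕ} {f : MvPolynomial ℕ ℤ} (h : LowDefectShape r f) :
    LowDefectShape (r + 1) (f * X r + C (c : ℤ)) where
  coeff_nonneg m := by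
    classical
    rw [coeff_add, coeff_mul_X', coeff_C]
    have := h.coeff_nonneg (m - Finsupp.single r 1)
    split_ifs <;> positivity
  le_leadMonomial m hm := by
    classical
    rcases mem_union.1 (support_add hm) with hm | hm
    · rw [support_mul_X, Finset.mem_map] at hm
      obtain ⟨m', hm', rfl⟩ := hm
      rw [leadMonomial_succ]
      exact add_le_add_left (h.le_leadMonomial m' hm') _
    · rw [mem_support_iff, coeff_C] at hm
      simp [← (ite_ne_right_iff.1 hm).1]
  leadCoeff_pos := by
    have hC : 0 ≤ coeff (leadMonomial (r + 1)) (C (c : ℤ) : MvPolynomial ℕ ℤ) := by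
      rw [coeff_C]
      split_ifs <;> positivity
    have hX : coeff (leadMonomial (r + 1)) (f * X r) = leadCoeff r f := by
      rw [leadMonomial_succ, coeff_mul_X]
      rfl
    rw [leadCoeff_eq_coeff, coeff_add, hX]
    linarith [h.leadCoeff_pos]

lemma leadMonomial_mem_support {r : ℕ} {f : MvPolynomial ℕ ℤ} (h : LowDefectShape r f) :
    leadMonomial r ∈ f.support :=
  mem_support_iff.2 h.leadCoeff_pos.ne'

end LowDefectShape

lemma LDP.lowDefectShape {r : ℕ} {f : MvPolynomial ℕ ℤ} {C : ℕ} (h : LDP r f C) :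
    LowDefectShape r f := by
  induction h with
  | const k _ hk _ => exact .const hk
  | mul _ _ ih₁ ih₂ => exact ih₁.mul ih₂
  | step _ _ _ _ _ ih => exact ih.mul_X_add_C

lemma eval_pow_eq_sum {σ R : Type*} [CommSemiring R] (b : R) (w : σ → ℕ)
    (p : MvPolynomial σ R) :
    eval (fun i => b ^ w i) p = ∑ m ∈ p.support, coeff m p * b ^ Finsupp.weight w m := by
  simp only [eval_eq, Finsupp.weight_apply, Finsupp.sum, smul_eq_mul, ← pow_mul,
    prod_pow_eq_pow_sum, mul_comm (w _)]

lemma eval3_eq_sum (r : ℕ) (f : MvPolynomial ℕ ℤ) (k : ℕ → ℕ) :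
    eval3 r f k = ∑ m ∈ f.support,
      coeff m f * 3 ^ Finsupp.weight (fun i => if i < r then k i else 0) m := by
  simp only [eval3, ← eval_pow_eq_sum, pow_ite, pow_zero]

lemma weight_ite_leadMonomial (r : ℕ) (k : ℕ → ℕ) :
    Finsupp.weight (fun i => if i < r then k i else 0) (leadMonomial r) = ∑ i ∈ range r, k i := by
  rw [weight_leadMonomial]
  exact sum_congr rfl fun i hi => if_pos (mem_range.1 hi)

namespace LowDefectShape

variable {r : ℕ} {f : MvPolynomial ℕ ℤ} (hf : LowDefectShape r f) (k : ℕ → ℕ)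
include hf

lemma exists_isMinVar_eq_zero {m : ℕ →₀ ℕ} (hm : m ∈ f.support) (hne : m ≠ leadMonomial r) :
    ∃ i, IsMinVar r f i ∧ m i = 0 := by
  obtain ⟨j, hj⟩ : ∃ j, m j < leadMonomial r j := by
    by_contra! h
    exact hne (le_antisymm (hf.le_leadMonomial m hm) h)
  have hjr : j < r := by
    by_contra h
    simp [leadMonomial_apply, h] at hj
  have hj0 : m j = 0 := by simpa [leadMonomial_apply, hjr] using hj
  obtain ⟨i, hi, hij⟩ := exists_isMinVar_nestLe f hjr
  exact ⟨i, hi, by_contra fun h => hij m hm h hj0⟩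

lemma weight_add_le {K : ℕ} (hK : ∀ i, IsMinVar r f i → K ≤ k i) {m : ℕ →₀ ℕ}
    (hm : m ∈ f.support) (hne : m ≠ leadMonomial r) :
    Finsupp.weight (fun i => if i < r then k i else 0) m + K ≤ ∑ i ∈ range r, k i := by
  obtain ⟨i, hi, hmi⟩ := hf.exists_isMinVar_eq_zero hm hne
  have hle : m + Finsupp.single i 1 ≤ leadMonomial r := by
    intro l
    have := hf.le_leadMonomial m hm l
    rw [Finsupp.add_apply, Finsupp.single_apply]
    split_ifs with hil
    · subst hil
      simp [hmi, leadMonomial_apply, hi.1]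
    · simpa using this
  have := Finsupp.weight_mono (fun i => if i < r then k i else 0) hle
  rw [map_add, Finsupp.weight_single, smul_eq_mul, one_mul, if_pos hi.1,
    weight_ite_leadMonomial r k] at this
  linarith [hK i hi]

lemma leadCoeff_mul_le_eval3 :
    leadCoeff r f * 3 ^ ∑ i ∈ range r, k i ≤ eval3 r f k := by
  rw [eval3_eq_sum, ← weight_ite_leadMonomial r k, leadCoeff_eq_coeff]
  exact single_le_sum (fun m _ => mul_nonneg (hf.coeff_nonneg m) (by positivity))
    hf.leadMonomial_mem_support

lemma eval3_mul_le {K : ℕ} (hK : ∀ i, IsMinVar r f i → K ≤ k i) :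
    eval3 r f k * 3 ^ K ≤
      (leadCoeff r f * 3 ^ K + ∑ m ∈ f.support, coeff m f) * 3 ^ ∑ i ∈ range r, k i := by
  set w := fun i => if i < r then k i else 0
  rw [eval3_eq_sum, ← add_sum_erase _ _ hf.leadMonomial_mem_support, add_mul, add_mul,
    sum_mul, sum_mul, weight_ite_leadMonomial r k, leadCoeff_eq_coeff, mul_right_comm]
  gcongr
  calc ∑ m ∈ f.support.erase (leadMonomial r), coeff m f * 3 ^ Finsupp.weight w m * 3 ^ K
      ≤ ∑ m ∈ f.support.erase (leadMonomial r), coeff m f * 3 ^ ∑ i ∈ range r, k i := by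
        refine sum_le_sum fun m hm => ?_
        rw [mul_assoc, ← pow_add]
        have := hf.coeff_nonneg m
        gcongr
        · norm_num
        · exact hf.weight_add_le k hK (mem_of_mem_erase hm) (ne_of_mem_erase hm)
    _ ≤ ∑ m ∈ f.support, coeff m f * 3 ^ ∑ i ∈ range r, k i :=
        sum_le_sum_of_subset_of_nonneg (erase_subset _ _) fun m _ _ =>
          mul_nonneg (hf.coeff_nonneg m) (by positivity)

end LowDefectShape

lemma LowDefectShape.sub_logb_le_dftF {r : ℕ} {f : MvPolynomial ℕ ℤ} (hf : LowDefectShape r f)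
    (C : ℕ) {K : ℕ} {k : ℕ → ℕ} (hK : ∀ i, IsMinVar r f i → K ≤ k i) :
    C - 3 * logb 3 (leadCoeff r f + (∑ m ∈ f.support, coeff m f : ℤ) / 3 ^ K) ≤ dftF r f C k := by
  set S := ∑ i ∈ range r, k i
  have hE_pos : (0 : ℝ) < eval3 r f k := by
    have : 0 < leadCoeff r f * 3 ^ S := mul_pos hf.leadCoeff_pos (by positivity)
    exact_mod_cast this.trans_le (hf.leadCoeff_mul_le_eval3 k)
  have hE : (eval3 r f k : ℝ) ≤
      (leadCoeff r f + (∑ m ∈ f.support, coeff m f : ℤ) / 3 ^ K) * 3 ^ S := by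
    rw [add_div' _ _ _ (by positivity), div_mul_eq_mul_div, le_div_iff₀ (by positivity)]
    exact_mod_cast hf.eval3_mul_le k hK
  set B : ℝ := leadCoeff r f + (∑ m ∈ f.support, coeff m f : ℤ) / 3 ^ K
  have hB_pos : 0 < B :=
    add_pos_of_pos_of_nonneg (by exact_mod_cast hf.leadCoeff_pos)
      (div_nonneg (by exact_mod_cast sum_nonneg fun m _ => hf.coeff_nonneg m) (by positivity))
  have hlog := logb_le_logb_of_le (b := 3) (by norm_num) hE_pos hE
  rw [logb_mul hB_pos.ne' (by positivity), logb_pow, logb_self_eq_one (by norm_num)] at hlog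
  rw [dftF]
  push_cast [S] at hlog ⊢
  linarith

lemma tendsto_logb_add_div_pow {a b c M : ℝ} (ha : a ≠ 0) (hb : 1 < b) :
    Tendsto (fun K : ℕ => logb c (a + M / b ^ K)) atTop (𝓝 (logb c a)) := by
  have h := tendsto_const_nhds (x := M).div_atTop (tendsto_pow_atTop_atTop_of_one_lt hb)
  simpa using (tendsto_const_nhds.add h).logb (by simpa using ha)

theorem small_dft_bounded_min_coord_general (r : ℕ) (f : MvPolynomial ℕ ℤ) (C : ℕ)
    (hf : LDP r f C) (s : ℝ) (hs : s < pairDft r f C) :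
    ∃ K : ℕ, ∀ k : ℕ → ℕ, dftF r f C k < s →
      ∃ i < r, IsMinVar r f i ∧ k i ≤ K := by
  have hshape := hf.lowDefectShape
  have hlim := (tendsto_logb_add_div_pow (c := 3) (M := (∑ m ∈ f.support, coeff m f : ℤ))
    (by exact_mod_cast hshape.leadCoeff_pos.ne' : (leadCoeff r f : ℝ) ≠ 0)
    (by norm_num : (1 : ℝ) < 3)).const_mul 3 |>.const_sub (C : ℝ)
  obtain ⟨K, hK⟩ := (hlim.eventually_const_lt hs).exists
  refine ⟨K, fun k hk => ?_⟩
  by_contra! hbig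
  exact hk.not_ge (hK.trans_le (hshape.sub_logb_le_dftF C fun i hi => (hbig i hi.1 hi).le)).le

/-- If `0 ≤ s < δ(f,C)` then there is `K` so that whenever
`δ_{f,C}(k₁,…,k_r) < s`, some coordinate at a minimal variable is at most `K`. -/
theorem small_dft_bounded_min_coord (r : ℕ) (f : MvPolynomial ℕ ℤ) (C : ℕ)
    (hf : LDP r f C) (hr : 0 < r) (s : ℝ) (hs0 : 0 ≤ s) (hs : s < pairDft r f C) :
    ∃ K : ℕ, ∀ k : ℕ → ℕ, dftF r f C k < s →
      ∃ i < r, IsMinVar r f i ∧ k i ≤ K :=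
  small_dft_bounded_min_coord_general r f C hf s hs
end

section
/- Suppose (f,C) is a low-defect pair and (g,D) is obtained from (f,C) by a nonempty finite sequence of direct truncations. Then: (1) δ(g,D) < δ(f,C); and (2) the nesting order on the variables of g is the restriction of the nesting order on the variables of f. -/
/-!
Substituting `3 ^ k` for `xᵢ` sends the monomial with exponent `m` to the monomial with exponent
`m` without its `i`-th entry, scaled by a positive factor. All coefficients of a low-defect
polynomial are nonnegative, so there is no cancellation: the support of the truncation is the
image of the support of `f`, and the nesting order of the truncation is the restriction of that
of `f`. If `xᵢ` is minimal, then `x₁ ⋯ x_r / xᵢ` occurs in `f` (induction on the construction of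
the pair), so the leading coefficient `a` becomes at least `a 3ᵏ + 1 > a 3ᵏ`, and
`δ` drops: `C + 3k - 3 log₃ (a 3ᵏ + 1) < C - 3 log₃ a`. Since truncating a low-defect pair at a
minimal variable gives a low-defect pair, this iterates along the chain.
-/

open MvPolynomial

section Complexity

lemma cpxW_self : ∀ {n : ℕ}, 0 < n → CpxW n n
  | 1, _ => CpxW.one
  | n + 2, _ => (cpxW_self (n := n + 1) n.succ_pos).add .one

lemma cpxW_cpx {n : ℕ} (hn : 0 < n) : CpxW n (cpx n) := Nat.sInf_mem ⟨n, cpxW_self hn⟩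

lemma cpx_le_of_cpxW {n m : ℕ} (h : CpxW n m) : cpx n ≤ m := Nat.sInf_le h

lemma cpx_mul_le {a b : ℕ} (ha : 0 < a) (hb : 0 < b) : cpx (a * b) ≤ cpx a + cpx b :=
  cpx_le_of_cpxW (.mul (cpxW_cpx ha) (cpxW_cpx hb))

lemma cpxW_three : CpxW 3 3 := .add (.add .one .one) .one

lemma cpxW_three_pow {k : ℕ} (hk : 0 < k) : CpxW (3 ^ k) (3 * k) := by
  induction k, hk using Nat.le_induction with
  | base => simpa using cpxW_three
  | succ k _ ih => simpa [pow_succ, mul_add] using ih.mul cpxW_three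

lemma cpx_mul_three_pow_add_le {a c : ℕ} (ha : 0 < a) (hc : 0 < c) (k : ℕ) :
    cpx (a * 3 ^ k + c) ≤ cpx a + cpx c + 3 * k := by
  rcases Nat.eq_zero_or_pos k with rfl | hk
  · simpa using cpx_le_of_cpxW (.add (cpxW_cpx ha) (cpxW_cpx hc))
  · have := cpx_le_of_cpxW (.add (.mul (cpxW_cpx ha) (cpxW_three_pow hk)) (cpxW_cpx hc))
    omega

end Complexity

section CoeffNonneg

variable {σ τ R : Type*} [CommSemiring R] [PartialOrder R]

def CoeffNonneg (p : MvPolynomial σ R) : Prop := ∀ m, 0 ≤ p.coeff m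

variable {p q : MvPolynomial σ R}

lemma CoeffNonneg.coeff_pos (hp : CoeffNonneg p) {m : σ →₀ ℕ} (hm : m ∈ p.support) :
    0 < p.coeff m :=
  (hp m).lt_of_ne (mem_support_iff.1 hm).symm

lemma CoeffNonneg.add [IsOrderedRing R] (hp : CoeffNonneg p) (hq : CoeffNonneg q) :
    CoeffNonneg (p + q) :=
  fun m => by rw [coeff_add]; exact add_nonneg (hp m) (hq m)

lemma CoeffNonneg.mul [IsOrderedRing R] (hp : CoeffNonneg p) (hq : CoeffNonneg q) :
    CoeffNonneg (p * q) := by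
  classical
  intro m
  rw [coeff_mul]
  exact Finset.sum_nonneg fun x _ => mul_nonneg (hp x.1) (hq x.2)

lemma coeffNonneg_C {a : R} (ha : 0 ≤ a) : CoeffNonneg (C a : MvPolynomial σ R) := by
  classical
  intro m
  rw [coeff_C]
  split_ifs <;> simp [ha]

lemma coeffNonneg_X [IsOrderedRing R] (i : σ) : CoeffNonneg (X i : MvPolynomial σ R) := by
  classical
  intro m
  rw [coeff_X]
  split_ifs <;> simp

lemma CoeffNonneg.rename {f : σ → τ} (hf : Function.Injective f) (hp : CoeffNonneg p) :
    CoeffNonneg (MvPolynomial.rename f p) := by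
  intro m
  by_cases hm : (MvPolynomial.rename f p).coeff m = 0
  · rw [hm]
  · obtain ⟨u, rfl, -⟩ := coeff_rename_ne_zero f p m hm
    rw [coeff_rename_mapDomain f hf]
    exact hp u

lemma coeff_mul_add_pos [IsStrictOrderedRing R] (hp : CoeffNonneg p) (hq : CoeffNonneg q)
    {a b : σ →₀ ℕ} (ha : 0 < p.coeff a) (hb : 0 < q.coeff b) : 0 < (p * q).coeff (a + b) := by
  classical
  rw [coeff_mul]
  exact Finset.sum_pos' (fun x _ => mul_nonneg (hp x.1) (hq x.2))
    ⟨(a, b), Finset.HasAntidiagonal.mem_antidiagonal.2 rfl, mul_pos ha hb⟩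

lemma coeff_mul_rename_pos [IsStrictOrderedRing R] {q : MvPolynomial τ R} {e : τ → σ}
    (he : Function.Injective e) (hp : CoeffNonneg p) (hq : CoeffNonneg q) {a : σ →₀ ℕ}
    {b : τ →₀ ℕ} (ha : 0 < p.coeff a) (hb : 0 < q.coeff b) :
    0 < (p * MvPolynomial.rename e q).coeff (a + b.mapDomain e) :=
  coeff_mul_add_pos hp (hq.rename he) ha (by rwa [coeff_rename_mapDomain e he])

open scoped Pointwise in
lemma support_mul_of_coeffNonneg [IsStrictOrderedRing R] [DecidableEq σ] (hp : CoeffNonneg p)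
    (hq : CoeffNonneg q) :
    (p * q).support = p.support + q.support := by
  refine (support_mul p q).antisymm fun n hn => ?_
  obtain ⟨a, ha, b, hb, rfl⟩ := Finset.mem_add.1 hn
  exact mem_support_iff.2 (coeff_mul_add_pos hp hq (hp.coeff_pos ha) (hq.coeff_pos hb)).ne'

end CoeffNonneg

section Exponents

noncomputable def leadExp (r : ℕ) : ℕ →₀ ℕ := ∑ i ∈ Finset.range r, Finsupp.single i 1

lemma leadCoeff_eq_coeff_leadExp (r : ℕ) (f : MvPolynomial ℕ ℤ) :
    leadCoeff r f = f.coeff (leadExp r) := rfl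

lemma leadExp_apply (r j : ℕ) : leadExp r j = if j < r then 1 else 0 := by
  simp [leadExp, Finsupp.finsetSum_apply, Finsupp.single_apply]

lemma leadExp_succ (r : ℕ) : leadExp (r + 1) = leadExp r + Finsupp.single r 1 :=
  Finset.sum_range_succ _ r

lemma mapDomain_add_right_apply (r : ℕ) (b : ℕ →₀ ℕ) (j : ℕ) :
    b.mapDomain (· + r) j = if r ≤ j then b (j - r) else 0 := by
  split_ifs with h
  · obtain ⟨t, rfl⟩ := Nat.exists_eq_add_of_le' h
    rw [Finsupp.mapDomain_apply (add_left_injective r), Nat.add_sub_cancel]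
  · exact Finsupp.mapDomain_of_notMem_range _ _ (by simp; omega)

lemma leadExp_add (r₁ r₂ : ℕ) :
    leadExp (r₁ + r₂) = leadExp r₁ + (leadExp r₂).mapDomain (· + r₁) := by
  ext j
  simp only [Finsupp.add_apply, mapDomain_add_right_apply, leadExp_apply]
  split_ifs <;> omega

def natSuccAbove (i j : ℕ) : ℕ := if j < i then j else j + 1

lemma natSuccAbove_strictMono (i : ℕ) : StrictMono (natSuccAbove i) := by
  intro a b h
  unfold natSuccAbove
  split_ifs <;> omega

lemma natSuccAbove_ne (i j : ℕ) : natSuccAbove i j ≠ i := by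
  unfold natSuccAbove
  split_ifs <;> omega

lemma exists_natSuccAbove_eq {i t : ℕ} (h : t ≠ i) : ∃ j, natSuccAbove i j = t :=
  ⟨if t < i then t else t - 1, by unfold natSuccAbove; split_ifs <;> omega⟩

noncomputable def dropExp (i : ℕ) (m : ℕ →₀ ℕ) : ℕ →₀ ℕ :=
  m.comapDomain (natSuccAbove i) (natSuccAbove_strictMono i).injective.injOn

@[simp]
lemma dropExp_apply (i : ℕ) (m : ℕ →₀ ℕ) (j : ℕ) : dropExp i m j = m (natSuccAbove i j) :=
  Finsupp.comapDomain_apply _ _ _ _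

lemma mapDomain_dropExp_add_single (i : ℕ) (m : ℕ →₀ ℕ) :
    (dropExp i m).mapDomain (natSuccAbove i) + Finsupp.single i (m i) = m := by
  ext t
  rcases eq_or_ne t i with rfl | ht
  · rw [Finsupp.add_apply,
      Finsupp.mapDomain_of_notMem_range _ _ fun ⟨j, hj⟩ => natSuccAbove_ne t j hj]
    simp
  · obtain ⟨j, rfl⟩ := exists_natSuccAbove_eq ht
    rw [Finsupp.add_apply, Finsupp.mapDomain_apply (natSuccAbove_strictMono i).injective,
      Finsupp.single_eq_of_ne ht, add_zero, dropExp_apply]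

lemma dropExp_erase (i : ℕ) (m : ℕ →₀ ℕ) : dropExp i (m.erase i) = dropExp i m := by
  ext j
  simp [Finsupp.erase_ne (natSuccAbove_ne i j)]

lemma dropExp_leadExp {i r : ℕ} (hi : i < r) : dropExp i (leadExp r) = leadExp (r - 1) := by
  ext j
  simp only [dropExp_apply, leadExp_apply, natSuccAbove]
  split_ifs <;> omega

end Exponents

section Truncation

variable {i k : ℕ}

lemma truncAt_add (p q : MvPolynomial ℕ ℤ) : truncAt (p + q) i k = truncAt p i k + truncAt q i k :=
  map_add _ _ _

lemma truncAt_mul (p q : MvPolynomial ℕ ℤ) : truncAt (p * q) i k = truncAt p i k * truncAt q i k :=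
  map_mul _ _ _

lemma truncAt_C (a : ℤ) : truncAt (C a) i k = C a := aeval_C _ _

lemma truncAt_X (j : ℕ) : truncAt (X j) i k =
    if j < i then X j else if j = i then C ((3 : ℤ) ^ k) else X (j - 1) := aeval_X _ _

lemma truncAt_rename_natSuccAbove (p : MvPolynomial ℕ ℤ) :
    truncAt (rename (natSuccAbove i) p) i k = p := by
  induction p using MvPolynomial.induction_on with
  | C a => rw [rename_C, truncAt_C]
  | add p q hp hq => rw [map_add, truncAt_add, hp, hq]
  | mul_X p j hp =>
    simp only [map_mul, rename_X, truncAt_mul, hp, truncAt_X, natSuccAbove]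
    split_ifs <;> first | rfl | omega

lemma truncAt_monomial (m : ℕ →₀ ℕ) (c : ℤ) :
    truncAt (monomial m c) i k = monomial (dropExp i m) (c * 3 ^ (k * m i)) := by
  conv_lhs => rw [← mapDomain_dropExp_add_single i m, ← mul_one c, ← monomial_mul,
    ← rename_monomial, truncAt_mul, truncAt_rename_natSuccAbove, ← X_pow_eq_monomial]
  have hpow : truncAt (X i ^ m i) i k = C ((3 : ℤ) ^ (k * m i)) := by
    simp [truncAt, pow_mul]
  rw [hpow, mul_comm, C_mul_monomial, mul_comm]

lemma coeff_truncAt (f : MvPolynomial ℕ ℤ) (n : ℕ →₀ ℕ) : (truncAt f i k).coeff n =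
    ∑ m ∈ f.support, if dropExp i m = n then f.coeff m * 3 ^ (k * m i) else 0 := by
  classical
  have hsum : truncAt f i k = ∑ m ∈ f.support, truncAt (monomial m (f.coeff m)) i k := by
    conv_lhs => rw [f.as_sum]
    exact map_sum _ _ _
  simp only [hsum, truncAt_monomial, coeff_sum, coeff_monomial]

lemma truncAt_rename_add_of_lt {r : ℕ} (hi : i < r) (p : MvPolynomial ℕ ℤ) :
    truncAt (rename (· + r) p) i k = rename (· + (r - 1)) p := by
  induction p using MvPolynomial.induction_on with
  | C a => rw [rename_C, rename_C, truncAt_C]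
  | add p q hp hq => rw [map_add, map_add, truncAt_add, hp, hq]
  | mul_X p j hp =>
    simp only [map_mul, rename_X, truncAt_mul, hp, truncAt_X]
    split_ifs <;> first | omega | (congr 2; omega)

lemma truncAt_rename_add_of_le {r : ℕ} (hi : r ≤ i) (p : MvPolynomial ℕ ℤ) :
    truncAt (rename (· + r) p) i k = rename (· + r) (truncAt p (i - r) k) := by
  induction p using MvPolynomial.induction_on with
  | C a => rw [rename_C, truncAt_C, truncAt_C, rename_C]
  | add p q hp hq => rw [map_add, truncAt_add, hp, hq, truncAt_add, map_add]
  | mul_X p j hp =>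
    simp only [map_mul, rename_X, truncAt_mul, hp, truncAt_X]
    split_ifs <;> first | omega | simp only [rename_X, rename_C] <;> congr 2 <;> omega

lemma truncAt_eq_self {p : MvPolynomial ℕ ℤ} (hp : p ∈ supported ℤ (Set.Iio i)) :
    truncAt p i k = p := by
  rw [supported_eq_range_rename, AlgHom.mem_range] at hp
  obtain ⟨q, rfl⟩ := hp
  induction q using MvPolynomial.induction_on with
  | C a => rw [rename_C, truncAt_C]
  | add p q hp hq => rw [map_add, truncAt_add, hp, hq]
  | mul_X p j hp =>
    rw [map_mul, truncAt_mul, hp, rename_X, truncAt_X, if_pos (Set.mem_Iio.1 j.2)]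

end Truncation

section TruncationSupport

variable {f : MvPolynomial ℕ ℤ} {i k : ℕ}

lemma support_truncAt (hf : CoeffNonneg f) :
    (truncAt f i k).support = f.support.image (dropExp i) := by
  ext n
  have hterm : ∀ m ∈ f.support, 0 ≤ if dropExp i m = n then f.coeff m * 3 ^ (k * m i) else 0 :=
    fun m _ => by split_ifs <;> positivity [hf m]
  rw [mem_support_iff, coeff_truncAt, Ne, Finset.sum_eq_zero_iff_of_nonneg hterm]
  simp only [Finset.mem_image, not_forall, exists_prop]
  refine exists_congr fun m => and_congr_right fun hm => ?_
  have := (hf.coeff_pos hm).ne'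
  split_ifs <;> simp_all

lemma nestLe_truncAt_iff (hf : CoeffNonneg f) (j j' : ℕ) :
    NestLe (truncAt f i k) j j' ↔ NestLe f (natSuccAbove i j) (natSuccAbove i j') := by
  simp [NestLe, support_truncAt hf]

lemma add_le_coeff_leadExp_truncAt {r : ℕ} (hf : CoeffNonneg f) (hi : i < r)
    (hA : leadExp r ∈ f.support) (hB : (leadExp r).erase i ∈ f.support) :
    f.coeff (leadExp r) * 3 ^ k + f.coeff ((leadExp r).erase i)
      ≤ (truncAt f i k).coeff (leadExp (r - 1)) := by
  have hne : leadExp r ≠ (leadExp r).erase i := fun h => by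
    simpa [leadExp_apply, hi] using DFunLike.congr_fun h i
  rw [coeff_truncAt]
  refine le_trans ?_ (Finset.sum_le_sum_of_subset_of_nonneg
    (Finset.insert_subset hA (Finset.singleton_subset_iff.2 hB)) fun m _ _ => ?_)
  · simp [Finset.sum_pair hne, dropExp_erase, dropExp_leadExp hi, leadExp_apply, hi]
  · split_ifs <;> positivity [hf m]

end TruncationSupport

lemma support_mul_X_add_C {σ R : Type*} [CommSemiring R] [DecidableEq σ] (p : MvPolynomial σ R)
    (s : σ) {c : R} (hc : c ≠ 0) : (p * X s + C c).support = insert 0 (p * X s).support := by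
  ext m
  rcases eq_or_ne m 0 with rfl | hm
  · simp [coeff_mul_X', hc]
  · rw [Finset.mem_insert, or_iff_right hm, mem_support_iff, mem_support_iff, coeff_add, coeff_C,
      if_neg (Ne.symm hm), add_zero]

section NestingOrder

variable {p f₁ f₂ : MvPolynomial ℕ ℤ} {s : ℕ} {c : ℤ}

lemma nestLe_mul_X_add_C_iff (hc : c ≠ 0) {j j' : ℕ} (hj : j ≠ s) (hj' : j' ≠ s) :
    NestLe (p * X s + C c) j j' ↔ NestLe p j j' := by
  simp only [NestLe, support_mul_X_add_C p s hc, Finset.forall_mem_insert, support_mul_X,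
    Finset.forall_mem_map]
  simp [hj.symm, hj'.symm]

lemma nestLe_mul_X_add_C_right (hc : c ≠ 0) (j : ℕ) : NestLe (p * X s + C c) j s := by
  simp only [NestLe, support_mul_X_add_C p s hc, Finset.forall_mem_insert, support_mul_X,
    Finset.forall_mem_map]
  simp

lemma not_nestLe_mul_X_add_C_left (hc : c ≠ 0) (hp : 0 ∈ p.support) {j : ℕ} (hj : j ≠ s) :
    ¬ NestLe (p * X s + C c) s j := by
  simp only [NestLe, support_mul_X_add_C p s hc, Finset.forall_mem_insert, support_mul_X,
    Finset.forall_mem_map]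
  exact fun h => h.2 0 hp (by simp) (by simp [hj.symm])

lemma nestLe_mul_rename_add_iff (hf₁ : CoeffNonneg f₁) (hf₂ : CoeffNonneg f₂) (r i j : ℕ) :
    NestLe (f₁ * rename (· + r) f₂) i j ↔ ∀ a ∈ f₁.support, ∀ b ∈ f₂.support,
      a i + b.mapDomain (· + r) i ≠ 0 → a j + b.mapDomain (· + r) j ≠ 0 := by
  classical
  simp only [NestLe, support_mul_of_coeffNonneg hf₁ (hf₂.rename (add_left_injective r)),
    support_rename_of_injective (add_left_injective r), Finset.mem_add, Finset.mem_image]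
  constructor
  · rintro h a ha b hb
    exact h _ ⟨a, ha, _, ⟨b, hb, rfl⟩, rfl⟩
  · rintro h _ ⟨a, ha, _, ⟨b, hb, rfl⟩, rfl⟩
    exact h a ha b hb

lemma nestLe_mul_rename_add_iff_left (hf₁ : CoeffNonneg f₁) (hf₂ : CoeffNonneg f₂) (hf₂0 : f₂ ≠ 0)
    {r i j : ℕ} (hi : i < r) (hj : j < r) :
    NestLe (f₁ * rename (· + r) f₂) i j ↔ NestLe f₁ i j := by
  obtain ⟨b, hb⟩ := support_nonempty.2 hf₂0
  simp only [nestLe_mul_rename_add_iff hf₁ hf₂, mapDomain_add_right_apply, if_neg (not_le.2 hi),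
    if_neg (not_le.2 hj), add_zero]
  exact ⟨fun h a ha => h a ha b hb, fun h a ha _ _ => h a ha⟩

lemma nestLe_mul_rename_add_iff_right (hf₁ : CoeffNonneg f₁) (hf₂ : CoeffNonneg f₂)
    {r : ℕ} (hf₁r : f₁ ∈ supported ℤ (Set.Iio r)) (hf₁0 : f₁ ≠ 0) (i j : ℕ) :
    NestLe (f₁ * rename (· + r) f₂) (i + r) (j + r) ↔ NestLe f₂ i j := by
  obtain ⟨a, ha⟩ := support_nonempty.2 hf₁0
  have hlow : ∀ a ∈ f₁.support, ∀ t, a (t + r) = 0 := fun a ha t => by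
    by_contra h
    have := mem_supported.1 hf₁r
      ((mem_vars_iff_mem_support _).2 ⟨a, ha, Finsupp.mem_support_iff.2 h⟩)
    simp at this
  simp +contextual only [nestLe_mul_rename_add_iff hf₁ hf₂, mapDomain_add_right_apply,
    le_add_self, if_true, Nat.add_sub_cancel, hlow, zero_add]
  exact ⟨fun h b hb => h a ha b hb, fun h _ _ b hb => h b hb⟩

end NestingOrder

namespace LDP

variable {r C : ℕ} {f : MvPolynomial ℕ ℤ}

lemma coeffNonneg (h : LDP r f C) : CoeffNonneg f := by
  induction h with
  | const => exact coeffNonneg_C (by positivity)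
  | mul _ _ ih₁ ih₂ => exact ih₁.mul (ih₂.rename (add_left_injective _))
  | step _ _ _ _ _ ih => exact (ih.mul (coeffNonneg_X _)).add (coeffNonneg_C (by positivity))

lemma mem_supported (h : LDP r f C) : f ∈ supported ℤ (Set.Iio r) := by
  classical
  induction h with
  | const => exact Subalgebra.algebraMap_mem _ _
  | @mul r₁ r₂ _ _ _ _ _ _ ih₁ ih₂ =>
    refine Subalgebra.mul_mem _ (supported_mono (fun j hj => ?_) ih₁) ?_
    · simp only [Set.mem_Iio] at hj ⊢; omega
    · rw [MvPolynomial.mem_supported] at ih₂ ⊢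
      refine (Finset.coe_subset.2 (vars_rename _ _)).trans fun j hj => ?_
      obtain ⟨a, ha, rfl⟩ := Finset.mem_image.1 hj
      have := ih₂ ha
      simp only [Set.mem_Iio] at this ⊢; omega
  | @step r _ _ _ _ _ _ _ ih =>
    refine Subalgebra.add_mem _ (Subalgebra.mul_mem _ (supported_mono (fun j hj => ?_) ih)
      (X_mem_supported.2 (Set.mem_Iio.2 r.lt_succ_self))) (Subalgebra.algebraMap_mem _ _)
    simp only [Set.mem_Iio] at hj ⊢; omega

lemma coeff_zero_pos (h : LDP r f C) : 0 < f.coeff 0 := by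
  induction h with
  | const _ _ hk => rw [coeff_C, if_pos rfl]; exact_mod_cast hk
  | @mul r₁ _ _ _ _ _ h₁ h₂ ih₁ ih₂ =>
    simpa using coeff_mul_rename_pos (add_left_injective r₁) h₁.coeffNonneg h₂.coeffNonneg ih₁ ih₂
  | step _ _ hc =>
    rw [coeff_add, coeff_C, if_pos rfl, coeff_mul_X', if_neg (Finsupp.notMem_support_iff.2 rfl),
      zero_add]
    exact_mod_cast hc

lemma leadCoeff_pos (h : LDP r f C) : 0 < leadCoeff r f := by
  rw [leadCoeff_eq_coeff_leadExp]
  induction h with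
  | const _ _ hk =>
    rw [leadExp, Finset.sum_range_zero, coeff_C, if_pos rfl]
    exact_mod_cast hk
  | @mul r₁ _ _ _ _ _ h₁ h₂ ih₁ ih₂ =>
    rw [leadExp_add]
    exact coeff_mul_rename_pos (add_left_injective r₁) h₁.coeffNonneg h₂.coeffNonneg ih₁ ih₂
  | @step r _ _ _ _ _ _ _ ih =>
    have hne : 0 ≠ leadExp r + Finsupp.single r 1 := fun h => by
      simpa using DFunLike.congr_fun h r
    rwa [leadExp_succ, coeff_add, coeff_mul_X, coeff_C, if_neg hne, add_zero]

lemma ne_zero (h : LDP r f C) : f ≠ 0 := fun hf => by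
  simpa [hf] using h.coeff_zero_pos

end LDP

section MinimalVariables

variable {r₁ r₂ C₁ C₂ i : ℕ} {f₁ f₂ : MvPolynomial ℕ ℤ}

lemma IsMinVar.of_mul_rename_add_left (h : IsMinVar (r₁ + r₂) (f₁ * rename (· + r₁) f₂) i)
    (h₁ : LDP r₁ f₁ C₁) (h₂ : LDP r₂ f₂ C₂) (hi : i < r₁) : IsMinVar r₁ f₁ i := by
  have key := fun {a b} => nestLe_mul_rename_add_iff_left (r := r₁) (i := a) (j := b)
    h₁.coeffNonneg h₂.coeffNonneg h₂.ne_zero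
  exact ⟨hi, fun j hj hji => (key hi hj).1 (h.2 j (by omega) ((key hj hi).2 hji))⟩

lemma IsMinVar.of_mul_rename_add_right (h : IsMinVar (r₁ + r₂) (f₁ * rename (· + r₁) f₂) i)
    (h₁ : LDP r₁ f₁ C₁) (h₂ : LDP r₂ f₂ C₂) (hi : r₁ ≤ i) : IsMinVar r₂ f₂ (i - r₁) := by
  have key := nestLe_mul_rename_add_iff_right h₁.coeffNonneg h₂.coeffNonneg h₁.mem_supported
    h₁.ne_zero
  obtain ⟨i, rfl⟩ := Nat.exists_eq_add_of_le' hi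
  rw [Nat.add_sub_cancel]
  exact ⟨by have := h.1; omega, fun j hj hji =>
    (key i j).1 (h.2 (j + r₁) (by omega) ((key j i).2 hji))⟩

lemma IsMinVar.of_mul_X_add_C {r C c : ℕ} {f : MvPolynomial ℕ ℤ}
    (h : IsMinVar (r + 1) (f * X r + MvPolynomial.C (c : ℤ)) i) (hf : LDP r f C) (hc : 0 < c) :
    (i < r ∧ IsMinVar r f i) ∨ (i = r ∧ r = 0) := by
  have hc' : (c : ℤ) ≠ 0 := by exact_mod_cast hc.ne'
  rcases eq_or_ne i r with rfl | hir
  -- `X i` lies above every other variable in the nesting order, so it is minimal only if alone.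
  · refine Or.inr ⟨rfl, Nat.eq_zero_of_not_pos fun hi => ?_⟩
    exact not_nestLe_mul_X_add_C_left hc' (mem_support_iff.2 hf.coeff_zero_pos.ne') hi.ne
      (h.2 0 (by omega) (nestLe_mul_X_add_C_right hc' 0))
  · have hi : i < r := by have := h.1; omega
    refine Or.inl ⟨hi, hi, fun j hj hji => ?_⟩
    have key := fun {a b} => nestLe_mul_X_add_C_iff (p := f) (s := r) (j := a) (j' := b) hc'
    exact (key hir hj.ne).1 (h.2 j (by omega) ((key hj.ne hir).2 hji))

end MinimalVariables

lemma LDP.coeff_erase_leadExp_pos {r C i : ℕ} {f : MvPolynomial ℕ ℤ} (h : LDP r f C)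
    (hi : IsMinVar r f i) : 0 < f.coeff ((leadExp r).erase i) := by
  induction h generalizing i with
  | const => exact absurd hi.1 (Nat.not_lt_zero i)
  | @mul r₁ r₂ _ _ _ _ h₁ h₂ ih₁ ih₂ =>
    have hpos := fun {a b} => coeff_mul_rename_pos (a := a) (b := b) (add_left_injective r₁)
      h₁.coeffNonneg h₂.coeffNonneg
    rcases lt_or_ge i r₁ with hir | hir
    · have hsplit : (leadExp (r₁ + r₂)).erase i
          = (leadExp r₁).erase i + (leadExp r₂).mapDomain (· + r₁) := by
        ext j
        simp only [Finsupp.erase_apply, Finsupp.add_apply, mapDomain_add_right_apply, leadExp_apply]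
        split_ifs <;> omega
      rw [hsplit]
      exact hpos (ih₁ (hi.of_mul_rename_add_left h₁ h₂ hir)) h₂.leadCoeff_pos
    · have hsplit : (leadExp (r₁ + r₂)).erase i
          = leadExp r₁ + ((leadExp r₂).erase (i - r₁)).mapDomain (· + r₁) := by
        ext j
        simp only [Finsupp.erase_apply, Finsupp.add_apply, mapDomain_add_right_apply, leadExp_apply]
        split_ifs <;> omega
      rw [hsplit]
      exact hpos h₁.leadCoeff_pos (ih₂ (hi.of_mul_rename_add_right h₁ h₂ hir))
  | @step r _ _ c D hc hD hf ih =>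
    rcases hi.of_mul_X_add_C hf hc with ⟨hir, hmin⟩ | ⟨rfl, rfl⟩
    · have hsplit : (leadExp (r + 1)).erase i = (leadExp r).erase i + Finsupp.single r 1 := by
        rw [leadExp_succ, Finsupp.erase_add, Finsupp.erase_single_ne hir.ne]
      have hne : 0 ≠ (leadExp r).erase i + Finsupp.single r 1 := fun h => by
        simpa using DFunLike.congr_fun h r
      rw [hsplit, coeff_add, coeff_mul_X, coeff_C, if_neg hne, add_zero]
      exact ih hmin
    · have h0 : (leadExp (0 + 1)).erase 0 = 0 := by
        ext j; simp only [Finsupp.erase_apply, leadExp_apply, Finsupp.coe_zero, Pi.zero_apply]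
        split_ifs <;> omega
      rw [h0]
      exact (LDP.step c D hc hD hf).coeff_zero_pos

lemma LDP.exists_eq_C_of_degree_zero {f : MvPolynomial ℕ ℤ} {C : ℕ} (h : LDP 0 f C) :
    ∃ a : ℕ, 0 < a ∧ f = MvPolynomial.C (a : ℤ) ∧ cpx a ≤ C := by
  obtain ⟨r, hr, hrf⟩ : ∃ r, r = 0 ∧ LDP r f C := ⟨0, rfl, h⟩
  clear h
  induction hrf with
  | const k C hk hC => exact ⟨k, hk, rfl, hC⟩
  | mul _ _ ih₁ ih₂ =>
    obtain ⟨a₁, ha₁, rfl, hc₁⟩ := ih₁ (by omega)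
    obtain ⟨a₂, ha₂, rfl, hc₂⟩ := ih₂ (by omega)
    refine ⟨a₁ * a₂, Nat.mul_pos ha₁ ha₂, by rw [rename_C, ← C_mul, Nat.cast_mul], ?_⟩
    have := cpx_mul_le ha₁ ha₂
    omega
  | step => omega

lemma LDP.truncate {r C i : ℕ} {f : MvPolynomial ℕ ℤ} (h : LDP r f C) (hi : IsMinVar r f i)
    (k : ℕ) : LDP (r - 1) (truncAt f i k) (C + 3 * k) := by
  induction h generalizing i with
  | const => exact absurd hi.1 (Nat.not_lt_zero i)
  | @mul r₁ r₂ f₁ _ _ _ h₁ h₂ ih₁ ih₂ =>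
    have := hi.1
    rcases lt_or_ge i r₁ with hir | hir
    · rw [truncAt_mul, truncAt_rename_add_of_lt hir]
      convert (ih₁ (hi.of_mul_rename_add_left h₁ h₂ hir)).mul h₂ using 1 <;> omega
    · have hf₁ : f₁ ∈ supported ℤ (Set.Iio i) :=
        supported_mono (Set.Iio_subset_Iio hir) h₁.mem_supported
      rw [truncAt_mul, truncAt_eq_self hf₁, truncAt_rename_add_of_le hir]
      convert h₁.mul (ih₂ (hi.of_mul_rename_add_right h₁ h₂ hir)) using 1 <;> omega
  | @step r _ C c D hc hD hf ih =>
    rcases hi.of_mul_X_add_C hf hc with ⟨hir, hmin⟩ | ⟨rfl, rfl⟩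
    · rw [truncAt_add, truncAt_mul, truncAt_C, truncAt_X, if_neg (by omega), if_neg (by omega)]
      convert (ih hmin).step c D hc hD using 1 <;> omega
    · obtain ⟨a, ha, rfl, hca⟩ := hf.exists_eq_C_of_degree_zero
      convert LDP.const (a * 3 ^ k + c) (C + D + 3 * k) (by positivity)
        (by have := cpx_mul_three_pow_add_le ha hc k; omega) using 1
      simp only [truncAt_add, truncAt_mul, truncAt_C, truncAt_X]
      simp

lemma LDP.pairDft_truncAt_lt {r C i : ℕ} {f : MvPolynomial ℕ ℤ} (h : LDP r f C)
    (hi : IsMinVar r f i) (k : ℕ) :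
    pairDft (r - 1) (truncAt f i k) (C + 3 * k) < pairDft r f C := by
  have hb := h.coeff_erase_leadExp_pos hi
  have hle := add_le_coeff_leadExp_truncAt (k := k) h.coeffNonneg hi.1
    (mem_support_iff.2 h.leadCoeff_pos.ne') (mem_support_iff.2 hb.ne')
  simp only [pairDft, leadCoeff_eq_coeff_leadExp]
  set a := f.coeff (leadExp r)
  have ha : (0 : ℝ) < a := by exact_mod_cast h.leadCoeff_pos
  have hlt : (a : ℝ) * 3 ^ k < (truncAt f i k).coeff (leadExp (r - 1)) := by
    exact_mod_cast (by linarith : a * 3 ^ k < _)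
  have hlog : Real.logb 3 ((a : ℝ) * 3 ^ k) = Real.logb 3 a + k := by
    rw [Real.logb_mul ha.ne' (by positivity), Real.logb_pow, Real.logb_self_eq_one (by norm_num),
      mul_one]
  have := Real.logb_lt_logb (b := 3) (by norm_num) (by positivity) hlt
  push_cast
  linarith

section Chains

variable {p q : ℕ × MvPolynomial ℕ ℤ × ℕ}

lemma DirectTrunc.ldp_pairDft_lt_nestLe (hpq : DirectTrunc p q) (hp : LDP p.1 p.2.1 p.2.2) :
    LDP q.1 q.2.1 q.2.2 ∧ pairDft q.1 q.2.1 q.2.2 < pairDft p.1 p.2.1 p.2.2 ∧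
      ∃ e : ℕ → ℕ, StrictMono e ∧ (∀ j < q.1, e j < p.1) ∧
        ∀ j j', NestLe q.2.1 j j' ↔ NestLe p.2.1 (e j) (e j') := by
  obtain ⟨r, f, C⟩ := p
  obtain ⟨r', g, D⟩ := q
  obtain ⟨i, k, hr, hi, hg, hD⟩ := hpq
  dsimp only at hr hi hg hD hp ⊢
  subst hr hg hD
  refine ⟨hp.truncate hi k, hp.pairDft_truncAt_lt hi k, natSuccAbove i,
    natSuccAbove_strictMono i, fun j hj => ?_, nestLe_truncAt_iff hp.coeffNonneg⟩
  have := hi.1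
  unfold natSuccAbove
  split_ifs <;> omega

lemma ldp_pairDft_lt_nestLe_of_transGen (hpq : Relation.TransGen DirectTrunc p q)
    (hp : LDP p.1 p.2.1 p.2.2) :
    LDP q.1 q.2.1 q.2.2 ∧ pairDft q.1 q.2.1 q.2.2 < pairDft p.1 p.2.1 p.2.2 ∧
      ∃ e : ℕ → ℕ, StrictMono e ∧ (∀ j < q.1, e j < p.1) ∧
        ∀ j j', NestLe q.2.1 j j' ↔ NestLe p.2.1 (e j) (e j') := by
  induction hpq with
  | single h => exact h.ldp_pairDft_lt_nestLe hp
  | tail _ h ih =>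
    obtain ⟨hq, hlt, e, he, hbd, hnest⟩ := ih
    obtain ⟨hq', hlt', e', he', hbd', hnest'⟩ := h.ldp_pairDft_lt_nestLe hq
    exact ⟨hq', hlt'.trans hlt, e ∘ e', he.comp he', fun j hj => hbd _ (hbd' j hj),
      fun j j' => (hnest' j j').trans (hnest _ _)⟩

end Chains

/-- A (nonempty) truncation decreases the defect of the pair,
and restricts the nesting order. -/
theorem truncation_dft_lt (r : ℕ) (f : MvPolynomial ℕ ℤ) (C : ℕ) (hf : LDP r f C)
    (r' : ℕ) (g : MvPolynomial ℕ ℤ) (D : ℕ)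
    (h : Relation.TransGen DirectTrunc (r, f, C) (r', g, D)) :
    pairDft r' g D < pairDft r f C ∧
    ∃ e : ℕ → ℕ, StrictMono e ∧ (∀ j < r', e j < r) ∧
      ∀ j j', j < r' → j' < r' → (NestLe g j j' ↔ NestLe f (e j) (e j')) := by
  obtain ⟨-, hlt, e, he, hbd, hnest⟩ := ldp_pairDft_lt_nestLe_of_transGen h hf
  exact ⟨hlt, e, he, hbd, fun j j' _ _ => hnest j j'⟩
end
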